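/- arXiv:2309.11311 — 2 statements merged into one kernel-verified Lean document; each statement's English description precedes it below -/
import Mathlib

section
/- Let φ : F₂ → PSL(2,ℤ) be the group homomorphism from the free group on two generators R, T determined by φ(R) = r and φ(T) = t. Then φ is surjective and its kernel is the normal closure in F₂ of the set {R², (TR)³}. -/
open Matrix MatrixGroups
open scoped LinearAlgebra.Projectivization

/-- The matrix `S = [[0, -1], [1, 0]]` as an element of `SL(2, ℤ)`. -/
def Smat : SL(2, ℤ) := ⟨!![0, -1; 1, 0], by norm_num [Matrix.det_fin_two_of]⟩

/-- The matrix `T = [[1, 1], [0, 1]]` as an element of `SL(2, ℤ)`. -/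
def Tmat : SL(2, ℤ) := ⟨!![1, 1; 0, 1], by norm_num [Matrix.det_fin_two_of]⟩

/-- The central subgroup `{I, -I}` of `SL(2, ℤ)`. -/
def pmOne : Subgroup SL(2, ℤ) := Subgroup.zpowers (-1)

instance : pmOne.Normal := ⟨by
  intro x hx g
  obtain ⟨k, rfl⟩ := Subgroup.mem_zpowers_iff.mp hx
  have h : g * (-1 : SL(2, ℤ)) ^ k * g⁻¹ = (-1) ^ k := by
    rw [← ((Commute.neg_one_left g).zpow_left k).eq, mul_assoc, mul_inv_cancel, mul_one]
  rw [h]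
  exact Subgroup.zpow_mem _ (Subgroup.mem_zpowers _) k⟩

/-- `PSL(2, ℤ)`: the quotient of `SL(2, ℤ)` by its central subgroup `{I, -I}`. -/
abbrev PSL2Z := SL(2, ℤ) ⧸ pmOne

/-- The image of `S = [[0, -1], [1, 0]]` in `PSL(2, ℤ)`. -/
def r : PSL2Z := QuotientGroup.mk Smat

/-- The image of `T = [[1, 1], [0, 1]]` in `PSL(2, ℤ)`. -/
def t : PSL2Z := QuotientGroup.mk Tmat

/-- The free group on the two generators `R` (indexed by `false`) and `T` (indexed by
`true`), mapping to `PSL(2, ℤ)` via `R ↦ r`, `T ↦ t`. -/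
def φ : FreeGroup Bool →* PSL2Z := FreeGroup.lift (fun b => bif b then t else r)

/-!
`φ` is onto because `SL(2, ℤ)` is generated by `S` and `T`. Since `r² = 1` and `(tr)³ = 1`,
`φ` factors through the group `P = ⟨R, T | R², (TR)³⟩`, and the kernel claim says that the
induced map `P → PSL(2, ℤ)` is injective. `P` is generated by `a = R` and `b = TR`, with
`a² = b³ = 1`, and it acts on the upper half-plane through `PSL(2, ℤ)`: there `a` acts as
`z ↦ -1/z`, mapping the right half-plane into the left one, while `b : z ↦ 1 - 1/z` and `b²`
map the left half-plane into the right one. By the ping-pong lemma `P` is the free product of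
`⟨a⟩` and `⟨b⟩` and acts faithfully.
-/

open ModularGroup UpperHalfPlane Subgroup

section PingPong

variable {G : Type*} [Group G]

lemma eq_one_or_eq_of_mem_zpowers {a g : G} (ha : a ^ 2 = 1) (hg : g ∈ zpowers a) :
    g = 1 ∨ g = a := by
  obtain ⟨k, rfl⟩ := mem_zpowers_iff.mp hg
  rw [zpow_eq_zpow_emod' k ha, Nat.cast_ofNat]
  have : k % 2 = 0 ∨ k % 2 = 1 := by omega
  rcases this with h | h <;> simp [h]

lemma eq_one_or_eq_or_eq_sq_of_mem_zpowers {b g : G} (hb : b ^ 3 = 1) (hg : g ∈ zpowers b) :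
    g = 1 ∨ g = b ∨ g = b ^ 2 := by
  obtain ⟨k, rfl⟩ := mem_zpowers_iff.mp hg
  rw [zpow_eq_zpow_emod' k hb, Nat.cast_ofNat]
  have : k % 3 = 0 ∨ k % 3 = 1 ∨ k % 3 = 2 := by omega
  rcases this with h | h | h <;> simp [h]

lemma three_le_mk_zpowers {b : G} (h₁ : b ≠ 1) (h₂ : b ^ 2 ≠ 1) :
    3 ≤ Cardinal.mk (zpowers b) := by
  let v : Fin 3 → zpowers b := ![1, ⟨b, mem_zpowers b⟩, ⟨b ^ 2, npow_mem_zpowers b 2⟩]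
  have hv : Function.Injective v := by
    have h₃ : b ≠ b ^ 2 := fun h => h₁ (by simpa [sq] using h)
    intro i j hij
    fin_cases i <;> fin_cases j <;> simp_all [v, Subtype.ext_iff, eq_comm]
  simpa using Cardinal.lift_mk_le_lift_mk_of_injective hv

lemma Monoid.CoprodI.lift_zpowers_subtype_surjective {ι : Type*} {g : ι → G}
    (hg : closure (Set.range g) = ⊤) :
    Function.Surjective (lift fun i => (zpowers (g i)).subtype) := by
  rw [← MonoidHom.range_eq_top, eq_top_iff, ← hg, closure_le]
  rintro _ ⟨i, rfl⟩
  exact ⟨of ⟨g i, mem_zpowers _⟩, by simp⟩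

open Pointwise in
theorem injective_of_ping_pong_two_three {K α : Type*} [Group K] [MulAction K α]
    (f : G →* K) {a b : G} (ha : a ^ 2 = 1) (hb : b ^ 3 = 1) (hab : closure {a, b} = ⊤)
    {X Y : Set α} (hX : X.Nonempty) (hY : Y.Nonempty) (hXY : Disjoint X Y)
    (haY : ∀ y ∈ Y, f a • y ∈ X) (hbX : ∀ x ∈ X, f b • x ∈ Y)
    (hb2X : ∀ x ∈ X, f (b ^ 2) • x ∈ Y) :
    Function.Injective f := by
  -- `f` is injective on the free product of `⟨a⟩` and `⟨b⟩` by ping-pong, and that free product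
  -- maps onto `G` because `a` and `b` generate.
  let gen : Bool → G := fun i => bif i then b else a
  let ι : ∀ i, zpowers (gen i) →* G := fun i => (zpowers (gen i)).subtype
  have moves_X {g : G} (hg : ∀ x ∈ X, f g • x ∈ Y) : g ≠ 1 := by
    rintro rfl
    obtain ⟨x, hx⟩ := hX
    exact hXY.ne_of_mem hx (by simpa using hg x hx) rfl
  have hcard : 3 ≤ Cardinal.mk (zpowers (gen true)) :=
    three_le_mk_zpowers (moves_X hbX) (moves_X hb2X)
  have hinj := Monoid.CoprodI.lift_injective_of_ping_pong (fun i => f.comp (ι i))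
    (Or.inr ⟨true, hcard⟩) (fun i => bif i then Y else X)
    (by rintro (_ | _); exacts [hX, hY])
    (by rintro (_ | _) (_ | _) h <;> simp_all [Function.onFun, hXY.symm])
    (by
      rintro (_ | _) (_ | _) hij ⟨g, hg⟩ hg1 <;> simp only [ne_eq, not_true] at hij
      · obtain rfl | rfl := eq_one_or_eq_of_mem_zpowers ha hg
        · simp at hg1
        · exact Set.smul_set_subset_iff.mpr haY
      · obtain rfl | rfl | rfl := eq_one_or_eq_or_eq_sq_of_mem_zpowers hb hg
        · simp at hg1
        · exact Set.smul_set_subset_iff.mpr hbX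
        · exact Set.smul_set_subset_iff.mpr hb2X)
  have hsurj : Function.Surjective (Monoid.CoprodI.lift ι) :=
    Monoid.CoprodI.lift_zpowers_subtype_surjective <| by
      rwa [show Set.range gen = {a, b} by ext; simp [gen]]
  have hcomp : f.comp (Monoid.CoprodI.lift ι) = Monoid.CoprodI.lift fun i => f.comp (ι i) :=
    Monoid.CoprodI.ext_hom _ _ fun i => by ext; simp
  rw [← hcomp, MonoidHom.coe_comp] at hinj
  exact hinj.of_comp_right hsurj

end PingPong

namespace PresentedGroup

theorem ker_lift_eq_normalClosure {α G : Type*} [Group G] {f : α → G}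
    {rels : Set (FreeGroup α)} (h : ∀ w ∈ rels, FreeGroup.lift f w = 1)
    (hinj : Function.Injective (toGroup h)) :
    (FreeGroup.lift f).ker = normalClosure rels := by
  ext w
  rw [MonoidHom.mem_ker, ← mk_eq_one_iff, ← map_eq_one_iff _ hinj]
  rfl

lemma closure_of_false_of_true_mul_of_false (rels : Set (FreeGroup Bool)) :
    closure {(of false : PresentedGroup rels), of true * of false} = ⊤ := by
  rw [eq_top_iff, ← closure_range_of, closure_le]
  rintro _ ⟨_ | _, rfl⟩
  · exact subset_closure (Or.inl rfl)
  · set H := closure {(of false : PresentedGroup rels), of true * of false}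
    have ha : of false ∈ H := subset_closure (Or.inl rfl)
    have hb : of true * of false ∈ H := subset_closure (Or.inr rfl)
    simpa using mul_mem hb (inv_mem ha)

end PresentedGroup

lemma ModularGroup.S_sq : S ^ 2 = -1 := Subtype.ext (by simp [S]; decide)

lemma ModularGroup.T_mul_S_pow_three : (T * S) ^ 3 = -1 :=
  Subtype.ext (by simp [S, T, pow_succ]; decide)

lemma r_sq : r ^ 2 = 1 := by
  rw [r, ← QuotientGroup.mk_pow, QuotientGroup.eq_one_iff, show Smat = S from rfl, S_sq]
  exact mem_zpowers _

lemma t_mul_r_pow_three : (t * r) ^ 3 = 1 := by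
  rw [t, r, ← QuotientGroup.mk_mul, ← QuotientGroup.mk_pow, QuotientGroup.eq_one_iff,
    show Tmat * Smat = T * S from rfl, T_mul_S_pow_three]
  exact mem_zpowers _

lemma φ_surjective : Function.Surjective φ := by
  rw [φ, FreeGroup.lift_surjective_iff_closure_range_eq_top, eq_top_iff,
    ← MonoidHom.range_eq_top.mpr (QuotientGroup.mk'_surjective pmOne), MonoidHom.range_eq_map,
    ← SpecialLinearGroup.SL2Z_generators, MonoidHom.map_closure, Set.image_pair]
  exact closure_mono fun g hg => by rcases hg with rfl | rfl; exacts [⟨false, rfl⟩, ⟨true, rfl⟩]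

noncomputable instance : MulAction PSL2Z ℍ :=
  MulAction.compHom ℍ <| QuotientGroup.lift pmOne (MulAction.toPermHom SL(2, ℤ) ℍ) <| by
    rw [pmOne, zpowers_le, MonoidHom.mem_ker]
    ext z
    simp

lemma r_smul (z : ℍ) : r • z = S • z := rfl

lemma t_mul_r_smul (z : ℍ) : (t * r) • z = (T * S) • z := rfl

namespace UpperHalfPlane

lemma re_S_smul (z : ℍ) : (S • z).re = -z.re / Complex.normSq z := by
  rw [modular_S_smul]
  simp [Complex.inv_re, neg_div]

lemma re_T_mul_S_smul (z : ℍ) : ((T * S) • z).re = 1 - z.re / Complex.normSq z := by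
  rw [mul_smul, modular_T_smul, vadd_re, re_S_smul]
  ring

lemma re_S_smul_neg {z : ℍ} (hz : 0 < z.re) : (S • z).re < 0 := by
  rw [re_S_smul, neg_div, neg_lt_zero]
  exact div_pos hz (Complex.normSq_pos.mpr z.ne_zero)

lemma one_lt_re_T_mul_S_smul {z : ℍ} (hz : z.re < 0) : 1 < ((T * S) • z).re := by
  rw [re_T_mul_S_smul, lt_sub_iff_add_lt, add_lt_iff_neg_left]
  exact div_neg_of_neg_of_pos hz (Complex.normSq_pos.mpr z.ne_zero)

lemma re_T_mul_S_smul_pos {z : ℍ} (hz : 1 < z.re) : 0 < ((T * S) • z).re := by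
  rw [re_T_mul_S_smul, sub_pos, div_lt_one (Complex.normSq_pos.mpr z.ne_zero),
    Complex.normSq_apply]
  nlinarith [z.im_pos, show z.re = (z : ℂ).re from rfl, show z.im = (z : ℂ).im from rfl]

end UpperHalfPlane

abbrev modularRels : Set (FreeGroup Bool) :=
  {FreeGroup.of false ^ 2, (FreeGroup.of true * FreeGroup.of false) ^ 3}

lemma lift_modularRels_eq_one :
    ∀ w ∈ modularRels, FreeGroup.lift (fun b => bif b then t else r) w = 1 := by
  rintro w (rfl | rfl) <;> simp [r_sq, t_mul_r_pow_three]

theorem toGroup_modularRels_injective :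
    Function.Injective (PresentedGroup.toGroup lift_modularRels_eq_one) := by
  set ρ := PresentedGroup.toGroup lift_modularRels_eq_one
  have ha : (PresentedGroup.of false : PresentedGroup modularRels) ^ 2 = 1 := by
    rw [PresentedGroup.of, ← map_pow]
    exact PresentedGroup.one_of_mem (Or.inl rfl)
  have hb : (.of true * .of false : PresentedGroup modularRels) ^ 3 = 1 := by
    rw [PresentedGroup.of, PresentedGroup.of, ← map_mul, ← map_pow]
    exact PresentedGroup.one_of_mem (Or.inr rfl)
  have hρa : ρ (.of false) = r := PresentedGroup.toGroup.of _
  have hρb : ρ (.of true * .of false) = t * r := by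
    simp only [ρ, map_mul, PresentedGroup.toGroup.of, cond_true, cond_false]
  refine injective_of_ping_pong_two_three ρ ha hb
    (PresentedGroup.closure_of_false_of_true_mul_of_false _)
    (X := {z : ℍ | z.re < 0}) (Y := {z : ℍ | 0 < z.re})
    ⟨(-1 : ℝ) +ᵥ I, by simp⟩ ⟨(1 : ℝ) +ᵥ I, by simp⟩
    (Set.disjoint_left.mpr fun z (h : z.re < 0) => lt_asymm h) (fun z hz => ?_)
    (fun z hz => ?_) (fun z hz => ?_)
  · rw [hρa, r_smul]
    exact re_S_smul_neg hz
  · rw [hρb, t_mul_r_smul]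
    exact zero_lt_one.trans (one_lt_re_T_mul_S_smul hz)
  · rw [map_pow, hρb, sq, mul_smul, t_mul_r_smul, t_mul_r_smul]
    exact re_T_mul_S_smul_pos (one_lt_re_T_mul_S_smul hz)

/-- `φ` is surjective, with kernel the normal closure of `{R², (TR)³}`. -/
theorem phi_surjective_ker_eq_normalClosure :
    Function.Surjective φ ∧
      φ.ker = Subgroup.normalClosure
        {FreeGroup.of false ^ 2, (FreeGroup.of true * FreeGroup.of false) ^ 3} :=
  ⟨φ_surjective, PresentedGroup.ker_lift_eq_normalClosure _ toGroup_modularRels_injective⟩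
end

section
/- The center of the braid group B₃ = ⟨σ₁, σ₂ | σ₁σ₂σ₁ = σ₂σ₁σ₂⟩ is exactly the subgroup generated by (σ₁σ₂)³, and this subgroup is infinite cyclic (the element (σ₁σ₂)³ has infinite order). -/
open Matrix MatrixGroups
open scoped LinearAlgebra.Projectivization

/-- The braid relation `σ₁σ₂σ₁ = σ₂σ₁σ₂`, with `σ₁` and `σ₂` the generators indexed by
`false` and `true` respectively. -/
def braidRels : Set (FreeGroup Bool) :=
  {FreeGroup.of false * FreeGroup.of true * FreeGroup.of false *
    (FreeGroup.of true * FreeGroup.of false * FreeGroup.of true)⁻¹}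

/-- The braid group `B₃ = ⟨σ₁, σ₂ ∣ σ₁σ₂σ₁ = σ₂σ₁σ₂⟩` on three strands. -/
abbrev B₃ := PresentedGroup braidRels

/-- The first standard generator of `B₃`. -/
def σ₁ : B₃ := PresentedGroup.of false

/-- The second standard generator of `B₃`. -/
def σ₂ : B₃ := PresentedGroup.of true

/-!
The Garside element `Δ = σ₁σ₂σ₁` conjugates `σ₁` and `σ₂` into each other, so
`Δ² = (σ₁σ₂)³` is central, and it has exponent sum `6`, hence infinite order. With `a = Δ` and
`b = σ₁σ₂` the group is `⟨a, b ∣ a² = b³⟩`, so `B₃ / ⟨Δ²⟩` is `ℤ/2 ∗ ℤ/3`. A free product of two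
nontrivial groups has trivial center, so a central element of `B₃` maps to `1` in `ℤ/2 ∗ ℤ/3`,
hence to `1` in `B₃ / ⟨Δ²⟩`, i.e. it lies in `⟨Δ²⟩`.
-/
theorem MonoidHom.map_mem_center_of_surjective {G H : Type*} [Group G] [Group H] {f : G →* H}
    (hf : Function.Surjective f) {z : G} (hz : z ∈ Subgroup.center G) :
    f z ∈ Subgroup.center H := by
  refine Subgroup.mem_center_iff.2 fun h => ?_
  obtain ⟨g, rfl⟩ := hf h
  rw [← map_mul, ← map_mul, Subgroup.mem_center_iff.1 hz]

theorem Subgroup.normal_of_le_center {G : Type*} [Group G] {H : Subgroup G}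
    (hH : H ≤ Subgroup.center G) : H.Normal :=
  ⟨fun n hn g => by rwa [Subgroup.mem_center_iff.1 (hH hn) g, mul_inv_cancel_right]⟩

namespace Monoid.CoprodI

variable {ι : Type*}

namespace NeWord

variable {M : ι → Type*} [∀ i, Monoid (M i)]

theorem head_index_eq_of_prod_eq {i₁ j₁ i₂ j₂ : ι} (A : NeWord M i₁ j₁) (B : NeWord M i₂ j₂)
    (h : A.prod = B.prod) : i₁ = i₂ := by
  classical
  have hw : A.toWord = B.toWord := Word.equiv.symm.injective h
  have := congrArg (fun w : Word M => w.toList.head?) hw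
  simp only [toWord, toList_head?, Option.some_inj] at this
  exact congrArg Sigma.fst this

theorem head_ne_one {i j : ι} (w : NeWord M i j) : w.head ≠ 1 := by
  induction w with
  | singleton _ hx => exact hx
  | append _ _ _ ih _ => exact ih

theorem prod_eq_of_head_or_of_head_mul {i j : ι} (w : NeWord M i j) :
    (i = j ∧ w.prod = of w.head) ∨
      ∃ k, k ≠ i ∧ ∃ w' : NeWord M k j, w.prod = of w.head * w'.prod := by
  induction w with
  | singleton x hx => exact .inl ⟨rfl, prod_singleton x hx⟩
  | @append i k l j w₁ hkl w₂ ih₁ _ =>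
    rcases ih₁ with ⟨rfl, h₁⟩ | ⟨m, hmi, w', h₁⟩
    · exact .inr ⟨l, hkl.symm, w₂, by rw [append_prod, h₁, append_head]⟩
    · refine .inr ⟨m, hmi, append w' hkl w₂, ?_⟩
      rw [append_prod, h₁, append_prod, append_head, mul_assoc]

theorem exists_prod_eq_of_head_mul {i j : ι} (w : NeWord M i j) (hij : i ≠ j) :
    ∃ k, k ≠ i ∧ ∃ w' : NeWord M k j, w.prod = of w.head * w'.prod :=
  w.prod_eq_of_head_or_of_head_mul.resolve_left fun h => hij h.1

end NeWord

theorem exists_neWord_prod_eq {M : ι → Type*} [∀ i, Monoid (M i)] {z : CoprodI M} (hz : z ≠ 1) :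
    ∃ (i j : ι) (w : NeWord M i j), w.prod = z := by
  classical
  have hz' : Word.equiv z ≠ Word.empty := fun h => hz <| by
    rw [← Word.equiv.symm_apply_apply z, h]
    exact Word.prod_empty
  obtain ⟨i, j, w, hw⟩ := NeWord.of_word _ hz'
  exact ⟨i, j, w, by rw [NeWord.prod, hw]; exact Word.equiv.symm_apply_apply z⟩

open NeWord in
theorem center_eq_bot {G : ι → Type*} [∀ i, Group (G i)] {i₀ j₀ : ι} (h : i₀ ≠ j₀)
    [Nontrivial (G i₀)] [Nontrivial (G j₀)] : Subgroup.center (CoprodI G) = ⊥ := by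
  refine (Subgroup.eq_bot_iff_forall _).2 fun z hz => by_contra fun hz1 => ?_
  have hcomm : ∀ g, g * z = z * g := Subgroup.mem_center_iff.1 hz
  obtain ⟨i, j, w, rfl⟩ := exists_neWord_prod_eq hz1
  by_cases hij : i = j
  · -- for a letter `u` of another factor, `u w` and `w u` are reduced words with different heads
    subst hij
    obtain ⟨k, hki, u, hu⟩ : ∃ k, k ≠ i ∧ ∃ u : G k, u ≠ 1 := by
      by_cases hi : i = i₀
      · subst hi
        exact ⟨j₀, h.symm, exists_ne 1⟩
      · exact ⟨i₀, Ne.symm hi, exists_ne 1⟩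
    exact hki <| head_index_eq_of_prod_eq (append (singleton u hu) hki w)
      (append w hki.symm (singleton u hu)) (by simp [hcomm])
  · -- moving the first letter of `w` to its end yields a reduced word with a different head
    obtain ⟨k, hki, w', hw'⟩ := w.exists_prod_eq_of_head_mul hij
    have hrot : w'.prod * of w.head = w.prod := by
      have := hcomm (of w.head)
      rw [hw', mul_assoc] at this
      rw [hw']
      exact (mul_left_cancel this).symm
    exact hki <| head_index_eq_of_prod_eq
      (append w' (Ne.symm hij) (singleton w.head w.head_ne_one)) w (by simpa using hrot)

end Monoid.CoprodI

namespace Multiplicative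

theorem ofAdd_one_pow_self (n : ℕ) : (ofAdd (1 : ZMod n)) ^ n = 1 := by
  rw [← ofAdd_nsmul, nsmul_one, ZMod.natCast_self, ofAdd_zero]

theorem mem_zpowers_ofAdd_one {n : ℕ} (x : Multiplicative (ZMod n)) :
    x ∈ Subgroup.zpowers (ofAdd (1 : ZMod n)) := by
  obtain ⟨k, hk⟩ := ZMod.intCast_surjective x.toAdd
  exact ⟨k, by simp only [← ofAdd_zsmul, zsmul_one, hk]; rfl⟩

noncomputable def zmodLift {G : Type*} [Group G] {n : ℕ} (g : G) (hg : g ^ n = 1) :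
    Multiplicative (ZMod n) →* G :=
  monoidHomOfForallMemZpowers mem_zpowers_ofAdd_one <| by
    rw [orderOf_ofAdd_eq_addOrderOf, ZMod.addOrderOf_one]
    exact orderOf_dvd_of_pow_eq_one hg

@[simp]
theorem zmodLift_ofAdd_one {G : Type*} [Group G] {n : ℕ} (g : G) (hg : g ^ n = 1) :
    zmodLift g hg (ofAdd 1) = g :=
  monoidHomOfForallMemZpowers_apply_gen _ _

end Multiplicative

namespace B₃

open Monoid

theorem braid_rel : σ₁ * σ₂ * σ₁ = σ₂ * σ₁ * σ₂ :=
  PresentedGroup.mk_eq_mk_of_mul_inv_mem rfl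

def garside : B₃ := σ₁ * σ₂ * σ₁

theorem semiconjBy_garside_σ₁ : SemiconjBy garside σ₁ σ₂ := by
  unfold SemiconjBy garside
  nth_rw 1 [braid_rel]
  group

theorem semiconjBy_garside_σ₂ : SemiconjBy garside σ₂ σ₁ := by
  unfold SemiconjBy garside
  nth_rw 2 [braid_rel]
  group

theorem garside_sq : garside ^ 2 = (σ₁ * σ₂) ^ 3 := by
  rw [garside, pow_two]
  nth_rw 2 [braid_rel]
  simp only [pow_succ, pow_zero, one_mul, mul_assoc]

theorem σ₁_mul_σ₂_pow_three_mem_center : (σ₁ * σ₂) ^ 3 ∈ Subgroup.center B₃ := by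
  rw [Subgroup.center_eq_iInf (PresentedGroup.closure_range_of _), ← garside_sq, pow_two]
  simp only [Subgroup.mem_iInf, Set.forall_mem_range, Subgroup.mem_centralizer_singleton_iff]
  rintro (_ | _)
  · exact semiconjBy_garside_σ₂.mul_left semiconjBy_garside_σ₁
  · exact semiconjBy_garside_σ₁.mul_left semiconjBy_garside_σ₂

def exponentSum : B₃ →* Multiplicative ℤ :=
  PresentedGroup.toGroup (f := fun _ => Multiplicative.ofAdd 1) <| by
    rintro _ rfl
    simp

theorem not_isOfFinOrder_σ₁_mul_σ₂_pow_three : ¬ IsOfFinOrder ((σ₁ * σ₂) ^ 3) := by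
  intro h
  have h6 : exponentSum ((σ₁ * σ₂) ^ 3) = Multiplicative.ofAdd 6 := by
    simp only [exponentSum, σ₁, σ₂, map_pow, map_mul, PresentedGroup.toGroup.of]
    rfl
  have := (exponentSum.isOfFinOrder h).eq_one'
  rw [h6] at this
  exact absurd this (by decide)

section Lift

variable {H : Type*} [Group H] {a b : H} (hab : a ^ 2 = b ^ 3)

def lift : B₃ →* H :=
  PresentedGroup.toGroup (f := fun i => bif i then a⁻¹ * b ^ 2 else b⁻¹ * a) <| by
    rintro _ rfl
    simp only [map_mul, map_inv, FreeGroup.lift_apply_of, cond_true, cond_false, mul_inv_eq_one]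
    calc b⁻¹ * a * (a⁻¹ * b ^ 2) * (b⁻¹ * a) = a := by group
      _ = a⁻¹ * b ^ 3 := by rw [← hab]; group
      _ = a⁻¹ * b ^ 2 * (b⁻¹ * a) * (a⁻¹ * b ^ 2) := by group

@[simp]
theorem lift_σ₁ : lift hab σ₁ = b⁻¹ * a := PresentedGroup.toGroup.of _

@[simp]
theorem lift_σ₂ : lift hab σ₂ = a⁻¹ * b ^ 2 := PresentedGroup.toGroup.of _

theorem lift_σ₁_mul_σ₂ : lift hab (σ₁ * σ₂) = b := by
  rw [map_mul, lift_σ₁, lift_σ₂]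
  group

theorem lift_garside : lift hab garside = a := by
  rw [garside, map_mul, lift_σ₁_mul_σ₂, lift_σ₁]
  group

end Lift

abbrev C₂₃ (i : Bool) : Type := Multiplicative (ZMod (bif i then 3 else 2))

instance (i : Bool) : Nontrivial (C₂₃ i) := by
  cases i
  · exact inferInstanceAs (Nontrivial (Multiplicative (ZMod 2)))
  · exact inferInstanceAs (Nontrivial (Multiplicative (ZMod 3)))

def x₂ : CoprodI C₂₃ := CoprodI.of (i := false) (Multiplicative.ofAdd 1)

def y₃ : CoprodI C₂₃ := CoprodI.of (i := true) (Multiplicative.ofAdd 1)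

theorem x₂_sq : x₂ ^ 2 = 1 := by
  rw [x₂, ← map_pow]
  exact (congrArg (CoprodI.of (M := C₂₃) (i := false)) (Multiplicative.ofAdd_one_pow_self 2)).trans
    (map_one _)

theorem y₃_cube : y₃ ^ 3 = 1 := by
  rw [y₃, ← map_pow]
  exact (congrArg (CoprodI.of (M := C₂₃) (i := true)) (Multiplicative.ofAdd_one_pow_self 3)).trans
    (map_one _)

def toC₂₃ : B₃ →* CoprodI C₂₃ := lift (a := x₂) (b := y₃) (by rw [x₂_sq, y₃_cube])

theorem toC₂₃_surjective : Function.Surjective toC₂₃ := by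
  have hgen : ∀ i, (CoprodI.of : C₂₃ i →* _).range ≤ toC₂₃.range := by
    rintro i _ ⟨m, rfl⟩
    obtain ⟨k, rfl⟩ := Multiplicative.mem_zpowers_ofAdd_one m
    rw [map_zpow]
    refine zpow_mem ?_ k
    cases i
    · exact ⟨garside, lift_garside _⟩
    · exact ⟨σ₁ * σ₂, lift_σ₁_mul_σ₂ _⟩
  have := CoprodI.lift_range_le _ _ hgen
  rw [CoprodI.lift_of'] at this
  exact fun z => this ⟨z, rfl⟩

instance : (Subgroup.zpowers ((σ₁ * σ₂) ^ 3)).Normal :=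
  Subgroup.normal_of_le_center (Subgroup.zpowers_le.2 σ₁_mul_σ₂_pow_three_mem_center)

abbrev FullTwistQuotient := B₃ ⧸ Subgroup.zpowers ((σ₁ * σ₂) ^ 3)

theorem mk_garside_sq : (garside : FullTwistQuotient) ^ 2 = 1 := by
  rw [← QuotientGroup.mk_pow, garside_sq, QuotientGroup.eq_one_iff]
  exact Subgroup.mem_zpowers _

theorem mk_σ₁_mul_σ₂_cube : ((σ₁ * σ₂ : B₃) : FullTwistQuotient) ^ 3 = 1 := by
  rw [← QuotientGroup.mk_pow, QuotientGroup.eq_one_iff]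
  exact Subgroup.mem_zpowers _

noncomputable def ofC₂₃ : CoprodI C₂₃ →* FullTwistQuotient :=
  CoprodI.lift fun
    | false => Multiplicative.zmodLift _ mk_garside_sq
    | true => Multiplicative.zmodLift _ mk_σ₁_mul_σ₂_cube

theorem ofC₂₃_toC₂₃ (g : B₃) : ofC₂₃ (toC₂₃ g) = g := by
  have hx : ofC₂₃ x₂ = garside := by
    rw [ofC₂₃, x₂, CoprodI.lift_of]
    exact Multiplicative.zmodLift_ofAdd_one _ _
  have hy : ofC₂₃ y₃ = (σ₁ * σ₂ : B₃) := by
    rw [ofC₂₃, y₃, CoprodI.lift_of]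
    exact Multiplicative.zmodLift_ofAdd_one _ _
  suffices ofC₂₃.comp toC₂₃ = QuotientGroup.mk' _ from DFunLike.congr_fun this g
  refine PresentedGroup.ext fun i => ?_
  cases i
  · change ofC₂₃ (toC₂₃ σ₁) = σ₁
    rw [toC₂₃, lift_σ₁, map_mul, map_inv, hx, hy, ← QuotientGroup.mk_inv, ← QuotientGroup.mk_mul,
      garside]
    congr 1
    group
  · change ofC₂₃ (toC₂₃ σ₂) = σ₂
    rw [toC₂₃, lift_σ₂, map_mul, map_inv, map_pow, hx, hy, ← QuotientGroup.mk_inv,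
      ← QuotientGroup.mk_pow, ← QuotientGroup.mk_mul, garside, pow_two]
    congr 1
    group

end B₃

/-- The center of `B₃` is exactly the subgroup generated by `(σ₁σ₂)³`, and this subgroup
is infinite cyclic (its generator has infinite order). -/
theorem center_B3_eq_zpowers :
    Subgroup.center B₃ = Subgroup.zpowers ((σ₁ * σ₂) ^ 3) ∧
      ¬ IsOfFinOrder ((σ₁ * σ₂) ^ 3) := by
  refine ⟨le_antisymm (fun z hz => ?_)
    (Subgroup.zpowers_le.2 B₃.σ₁_mul_σ₂_pow_three_mem_center),
    B₃.not_isOfFinOrder_σ₁_mul_σ₂_pow_three⟩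
  have hz1 : B₃.toC₂₃ z = 1 := by
    rw [← Subgroup.mem_bot, ← Monoid.CoprodI.center_eq_bot Bool.false_ne_true]
    exact B₃.toC₂₃.map_mem_center_of_surjective B₃.toC₂₃_surjective hz
  rw [← QuotientGroup.eq_one_iff, ← B₃.ofC₂₃_toC₂₃, hz1, map_one]
end
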